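/- Let L be a Lagrangian of order r in m field components over an open set U ⊆ ℝⁿ. Then for every smooth field q : U → ℝᵐ and every smooth variation δq : U → ℝᵐ, the first variation satisfies, as smooth functions on U: Σ_{k=0}^{r} (∂L/∂q^i_{,μ₁…μₖ})[q] · ∂_{μ₁}⋯∂_{μₖ} δq^i = Σ_{k=0}^{r} ∂_{μ₁}⋯∂_{μₖ}( (δL/δq^i_{,μ₁…μₖ})[q] · δq^i ), with summation over repeated indices i and μ. -/

import Mathlib

open scoped BigOperators

noncomputable section

/-- Partial derivative of a function on `ℝⁿ` in the coordinate direction `μ`. -/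
def pd {n : ℕ} (μ : Fin n) (f : (Fin n → ℝ) → ℝ) : (Fin n → ℝ) → ℝ :=
  fun x => fderiv ℝ f x (Pi.single μ 1)

/-- Iterated partial derivatives `∂_{μ₁}⋯∂_{μₖ}` along a list of coordinate directions. -/
def pds {n : ℕ} : List (Fin n) → ((Fin n → ℝ) → ℝ) → (Fin n → ℝ) → ℝ
  | [], f => f
  | μ :: l, f => pd μ (pds l f)

/-- Index of a jet variable `q^i_{,μ₁…μₖ}` (`k ≤ r`). -/
abbrev JetIdx (n m r : ℕ) := Fin m × Σ k : Fin (r + 1), (Fin (k : ℕ) → Fin n)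

abbrev JetFiber (n m r : ℕ) := JetIdx n m r → ℝ

/-- The order-`r` jet space: base coordinates together with all jet variables. -/
abbrev JetSpace (n m r : ℕ) := (Fin n → ℝ) × JetFiber n m r

/-- The `r`-jet prolongation of a field `q`. -/
def jetOf {n m : ℕ} (r : ℕ) (q : (Fin n → ℝ) → Fin m → ℝ) (x : Fin n → ℝ) :
    JetSpace n m r :=
  (x, fun p => pds (List.ofFn p.2.2) (fun y => q y p.1) x)

/-- The symmetrized delta `δ^{(μ₁}_{ν₁}⋯δ^{μₖ)}_{νₖ}` (zero if arities differ). -/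
def symCoeff {n k k' : ℕ} (μ : Fin k → Fin n) (ν : Fin k' → Fin n) : ℝ :=
  ((Finset.univ.filter fun σ : Equiv.Perm (Fin k) =>
      List.ofFn (μ ∘ σ) = List.ofFn ν).card : ℝ) / (Nat.factorial k : ℝ)

def jetDir {n : ℕ} (m r : ℕ) (i : Fin m) {k : ℕ} (μ : Fin k → Fin n) : JetFiber n m r :=
  fun p => if p.1 = i then symCoeff μ p.2.2 else 0

/-- The symmetrized partial derivative `∂L/∂q^i_{,μ₁…μₖ}` of a jet function,
obeying `∂q^i_{,ν₁…νₖ}/∂q^j_{,μ₁…μ_l} = δ^l_k δ^i_j δ^{(μ₁}_{ν₁}⋯δ^{μₖ)}_{νₖ}`. -/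
def pdQ {n m r : ℕ} (L : JetSpace n m r → ℝ) (i : Fin m) {k : ℕ} (μ : Fin k → Fin n) :
    JetSpace n m r → ℝ :=
  fun z => fderiv ℝ L z ((0 : Fin n → ℝ), jetDir m r i μ)

/-- The partial derivative `∂L/∂x^μ` of a jet function w.r.t. a base coordinate. -/
def pdX {n m r : ℕ} (L : JetSpace n m r → ℝ) (μ : Fin n) : JetSpace n m r → ℝ :=
  fun z => fderiv ℝ L z ((Pi.single μ 1 : Fin n → ℝ), 0)

def idxCast {n m a b : ℕ} (h : a ≤ b) (p : JetIdx n m a) : JetIdx n m b :=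
  ⟨p.1, ⟨⟨(p.2.1 : ℕ), Nat.lt_of_lt_of_le p.2.1.isLt (Nat.succ_le_succ h)⟩, p.2.2⟩⟩

/-- Truncation of a higher-order jet to a lower order. -/
def trunc {n m a b : ℕ} (h : a ≤ b) (z : JetSpace n m b) : JetSpace n m a :=
  (z.1, fun p => z.2 (idxCast h p))

/-- Regard an order-`a` jet function as an order-`b` jet function (`a ≤ b`). -/
def liftJ {n m a b : ℕ} (h : a ≤ b) (F : JetSpace n m a → ℝ) : JetSpace n m b → ℝ :=
  fun z => F (trunc h z)

def idxExt {n m a : ℕ} (p : JetIdx n m a) (μ : Fin n) : JetIdx n m (a + 1) :=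
  ⟨p.1, ⟨⟨(p.2.1 : ℕ) + 1, Nat.succ_lt_succ p.2.1.isLt⟩, Fin.snoc p.2.2 μ⟩⟩

/-- The total derivative `d_μ` of a jet function. -/
def dTot {n m a : ℕ} (μ : Fin n) (F : JetSpace n m a → ℝ) : JetSpace n m (a + 1) → ℝ :=
  fun z => pdX F μ (trunc (Nat.le_succ a) z)
    + ∑ p : JetIdx n m a, pdQ F p.1 p.2.2 (trunc (Nat.le_succ a) z) * z.2 (idxExt p μ)

/-- Iterated total derivatives `d_{ν₁}⋯d_{νₖ}` of a jet function. -/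
def dTots {n m : ℕ} : (a k : ℕ) → (Fin k → Fin n) → (JetSpace n m a → ℝ) →
    JetSpace n m (a + k) → ℝ
  | _, 0, _, F => F
  | a, k + 1, ν, F => dTot (ν 0) (dTots a k (fun j => ν j.succ) F)

/-- The Euler–Lagrange expressions `δL/δq^i` of an order-`r` Lagrangian,
as a jet function of order `2r`. -/
def ELjet {n m r : ℕ} (L : JetSpace n m r → ℝ) (i : Fin m) : JetSpace n m (r + r) → ℝ :=
  fun z => ∑ k : Fin (r + 1), (-1 : ℝ) ^ (k : ℕ) *
    ∑ μ : Fin (k : ℕ) → Fin n,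
      liftJ (by have := k.isLt; omega) (dTots r (k : ℕ) μ (pdQ L i μ)) z

/-- The Euler–Lagrange expressions `δL/δq^i` evaluated along a field `q`
(using `(d_μ F)[q] = ∂_μ (F[q])`). -/
def ELfield {n m : ℕ} (r : ℕ) (L : JetSpace n m r → ℝ) (q : (Fin n → ℝ) → Fin m → ℝ)
    (i : Fin m) : (Fin n → ℝ) → ℝ :=
  fun x => ∑ k ∈ Finset.range (r + 1), (-1 : ℝ) ^ k *
    ∑ μ : Fin k → Fin n, pds (List.ofFn μ) (fun y => pdQ L i μ (jetOf r q y)) x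

/-- Scaling of the jet variables: `f[tq]` is `f ∘ scaleJet t`. -/
def scaleJet {n m r : ℕ} (t : ℝ) (z : JetSpace n m r) : JetSpace n m r := (z.1, t • z.2)

/-- The Lagrangian momenta `P_i^{μ₁…μ_a}` of an order-`r` Lagrangian as jet functions. -/
def Pjet {n m r : ℕ} (L : JetSpace n m r → ℝ) (i : Fin m) {a : ℕ} (κ : Fin a → Fin n) :
    JetSpace n m (r + r) → ℝ :=
  fun z => ∑ l : Fin (r - a + 1), (-1 : ℝ) ^ (l : ℕ) *
    ∑ ν : Fin (l : ℕ) → Fin n,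
      liftJ (by have := l.isLt; omega) (dTots r (l : ℕ) ν (pdQ L i (Fin.append κ ν))) z

/-- The Lagrangian momenta `P_i^{μ₁…μ_a}` evaluated along a field `q`. -/
def PmomF {n m : ℕ} (r : ℕ) (L : JetSpace n m r → ℝ) (q : (Fin n → ℝ) → Fin m → ℝ)
    (i : Fin m) {a : ℕ} (κ : Fin a → Fin n) : (Fin n → ℝ) → ℝ :=
  fun y => ∑ l ∈ Finset.range (r - a + 1), (-1 : ℝ) ^ l *
    ∑ ν : Fin l → Fin n,
      pds (List.ofFn ν) (fun w => pdQ L i (Fin.append κ ν) (jetOf r q w)) y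

/-- The Helmholtz expressions `H_{ij}^{μ₁…μₖ}(ε)` of an order-`s` system,
as jet functions of order `2s`. -/
def Hjet {n m s : ℕ} (ε : Fin m → JetSpace n m s → ℝ) (i j : Fin m) {k : ℕ}
    (μ : Fin k → Fin n) : JetSpace n m (s + s) → ℝ :=
  fun z => liftJ (Nat.le_add_right s s) (pdQ (ε i) j μ) z
    - (-1 : ℝ) ^ k *
      ∑ l : Fin (s - k + 1), ((k + (l : ℕ)).choose k : ℝ) * (-1 : ℝ) ^ (l : ℕ) *
        ∑ ν : Fin (l : ℕ) → Fin n,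
          liftJ (by have := l.isLt; omega) (dTots s (l : ℕ) ν (pdQ (ε j) i (Fin.append μ ν))) z

/-- The Vainberg–Tonti Lagrangian `Λ(ε)[q] = ∫₀¹ ε_i[tq] q^i dt`. -/
def VTjet {n m s : ℕ} (ε : Fin m → JetSpace n m s → ℝ) : JetSpace n m s → ℝ :=
  fun z => ∫ t in (0:ℝ)..1, ∑ i : Fin m,
    ε i (scaleJet t z) * z.2 ⟨i, ⟨⟨0, Nat.succ_pos s⟩, Fin.elim0⟩⟩



/-!
The momenta `A M = (∂L/∂q^i_{,M})[q]` are symmetric in the directions `M`, so they form a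
family indexed by multisets, and the higher Euler operators are their binomial inverse:
`A M = Σ_l C(|M|+l, |M|) Σ_{|ν|=l} ∂_ν (δL/δq^i_{,M+ν})[q]`, the coefficients collapsing by
`Σ_{a+b=K} C(K,a) (-1)^b = 0^K`. Substituting this into the left-hand side and comparing with
the Leibniz expansion of the right-hand side, valid for every symmetric family `B`,
`Σ_{|μ|=K} ∂_μ(B_μ g) = Σ_{a+b=K} C(K,a) Σ_{|ρ|=b} Σ_{|ν|=a} ∂_ν B_{ρ+ν} ∂_ρ g`,
leaves only a reindexing of the triangle `k + l ≤ r` by antidiagonals.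
-/

open Finset

section PartialDerivatives

variable {n : ℕ} {U : Set (Fin n → ℝ)}

theorem pd_congr (hU : IsOpen U) {f g : (Fin n → ℝ) → ℝ} (h : Set.EqOn f g U)
    {x : Fin n → ℝ} (hx : x ∈ U) (μ : Fin n) : pd μ f x = pd μ g x := by
  rw [pd, pd, (h.eventuallyEq_of_mem (hU.mem_nhds hx)).fderiv_eq]

theorem contDiffOn_pd (hU : IsOpen U) {f : (Fin n → ℝ) → ℝ}
    (hf : ContDiffOn ℝ (⊤ : ℕ∞) f U) (μ : Fin n) : ContDiffOn ℝ (⊤ : ℕ∞) (pd μ f) U :=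
  (hf.fderiv_of_isOpen hU (by norm_cast)).clm_apply contDiffOn_const

theorem contDiffOn_pds (hU : IsOpen U) {f : (Fin n → ℝ) → ℝ}
    (hf : ContDiffOn ℝ (⊤ : ℕ∞) f U) (s : List (Fin n)) : ContDiffOn ℝ (⊤ : ℕ∞) (pds s f) U := by
  induction s with
  | nil => exact hf
  | cons μ s ih => exact contDiffOn_pd hU ih μ

theorem ContDiffOn.differentiableAt_of_isOpen (hU : IsOpen U) {f : (Fin n → ℝ) → ℝ}
    (hf : ContDiffOn ℝ (⊤ : ℕ∞) f U) {x : Fin n → ℝ} (hx : x ∈ U) : DifferentiableAt ℝ f x :=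
  (hf.differentiableOn (by simp)).differentiableAt (hU.mem_nhds hx)

theorem pd_sum (hU : IsOpen U) {ι : Type*} (s : Finset ι) (F : ι → (Fin n → ℝ) → ℝ)
    (hF : ∀ i ∈ s, ContDiffOn ℝ (⊤ : ℕ∞) (F i) U) {x : Fin n → ℝ} (hx : x ∈ U) (μ : Fin n) :
    pd μ (fun y => ∑ i ∈ s, F i y) x = ∑ i ∈ s, pd μ (F i) x := by
  simp only [pd, fderiv_fun_sum fun i hi => (hF i hi).differentiableAt_of_isOpen hU hx,
    FunLike.coe_sum, Finset.sum_apply]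

theorem pd_const_mul (hU : IsOpen U) {f : (Fin n → ℝ) → ℝ} (hf : ContDiffOn ℝ (⊤ : ℕ∞) f U)
    (c : ℝ) {x : Fin n → ℝ} (hx : x ∈ U) (μ : Fin n) :
    pd μ (fun y => c * f y) x = c * pd μ f x := by
  simp [pd, fderiv_const_mul (hf.differentiableAt_of_isOpen hU hx) c]

theorem pd_mul (hU : IsOpen U) {f g : (Fin n → ℝ) → ℝ} (hf : ContDiffOn ℝ (⊤ : ℕ∞) f U)
    (hg : ContDiffOn ℝ (⊤ : ℕ∞) g U) {x : Fin n → ℝ} (hx : x ∈ U) (μ : Fin n) :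
    pd μ (fun y => f y * g y) x = pd μ f x * g x + f x * pd μ g x := by
  simp only [pd, fderiv_fun_mul (hf.differentiableAt_of_isOpen hU hx)
    (hg.differentiableAt_of_isOpen hU hx), add_apply, smul_apply, smul_eq_mul]
  ring

theorem pds_append (s t : List (Fin n)) (f : (Fin n → ℝ) → ℝ) :
    pds (s ++ t) f = pds s (pds t f) := by
  induction s with
  | nil => rfl
  | cons μ s ih => rw [List.cons_append, pds, ih, pds]

theorem pds_sum (hU : IsOpen U) {ι : Type*} (s : Finset ι) (F : ι → (Fin n → ℝ) → ℝ)
    (hF : ∀ i ∈ s, ContDiffOn ℝ (⊤ : ℕ∞) (F i) U) (t : List (Fin n)) {x : Fin n → ℝ}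
    (hx : x ∈ U) : pds t (fun y => ∑ i ∈ s, F i y) x = ∑ i ∈ s, pds t (F i) x := by
  induction t generalizing x with
  | nil => rfl
  | cons μ t ih =>
    rw [pds, pd_congr hU (fun y hy => ih hy) hx,
      pd_sum hU s _ (fun i hi => contDiffOn_pds hU (hF i hi) t) hx]
    rfl

theorem pds_const_mul (hU : IsOpen U) {f : (Fin n → ℝ) → ℝ} (hf : ContDiffOn ℝ (⊤ : ℕ∞) f U)
    (c : ℝ) (t : List (Fin n)) {x : Fin n → ℝ} (hx : x ∈ U) :
    pds t (fun y => c * f y) x = c * pds t f x := by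
  induction t generalizing x with
  | nil => rfl
  | cons μ t ih =>
    rw [pds, pd_congr hU (fun y hy => ih hy) hx, pd_const_mul hU (contDiffOn_pds hU hf t) c hx]
    rfl

end PartialDerivatives

section Combinatorics

theorem sum_fun_fin_append {α M : Type*} [Fintype α] [AddCommMonoid M] {a b : ℕ}
    (F : (Fin (a + b) → α) → M) :
    ∑ τ, F τ = ∑ ν : Fin a → α, ∑ ν' : Fin b → α, F (Fin.append ν ν') := by
  rw [← Fintype.sum_prod_type', ← (Fin.appendEquiv a b).sum_comp]
  rfl

theorem sum_fun_fin_succ {α M : Type*} [Fintype α] [AddCommMonoid M] {k : ℕ}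
    (F : (Fin (k + 1) → α) → M) :
    ∑ μ, F μ = ∑ c : α, ∑ μ : Fin k → α, F (Fin.cons c μ) := by
  rw [← Fintype.sum_prod_type', ← (Fin.consEquiv fun _ => α).sum_comp]
  rfl

theorem sum_range_sum_range_sub_eq_sum_antidiagonal {M : Type*} [AddCommMonoid M] (N : ℕ)
    (f : ℕ → ℕ → M) :
    ∑ k ∈ range (N + 1), ∑ l ∈ range (N - k + 1), f k l
      = ∑ K ∈ range (N + 1), ∑ p ∈ antidiagonal K, f p.1 p.2 := by
  simp_rw [Nat.sum_antidiagonal_eq_sum_range_succ f, Nat.succ_eq_add_one, sum_range_diag_flip]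
  refine sum_congr rfl fun k hk => ?_
  rw [Nat.sub_add_comm (Nat.lt_succ_iff.1 (mem_range.1 hk))]

theorem sum_antidiagonal_choose_mul_choose_mul_neg_one_pow (k K : ℕ) :
    ∑ p ∈ antidiagonal K,
      ((k + p.1).choose k : ℝ) * ((k + K).choose (k + p.1) : ℝ) * (-1) ^ p.2
      = ((k + K).choose k : ℝ) * 0 ^ K := by
  have hterm : ∀ p ∈ antidiagonal K,
      ((k + p.1).choose k : ℝ) * ((k + K).choose (k + p.1) : ℝ) * (-1) ^ p.2
        = ((k + K).choose k : ℝ) * (K.choose p.1 • ((1 : ℝ) ^ p.1 * (-1) ^ p.2)) := by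
    intro p hp
    have hK : p.1 + p.2 = K := mem_antidiagonal.1 hp
    have h := Nat.choose_mul (n := k + K) (k := k + p.1) (s := k) (by omega)
    rw [show k + K - k = K by omega, show k + p.1 - k = p.1 by omega] at h
    have hR : ((k + K).choose (k + p.1) : ℝ) * (k + p.1).choose k
        = (k + K).choose k * K.choose p.1 := by exact_mod_cast h
    rw [nsmul_eq_mul, one_pow, one_mul]
    linear_combination (-1 : ℝ) ^ p.2 * hR
  rw [sum_congr rfl hterm, ← mul_sum, ← (Commute.all _ _).add_pow', add_neg_cancel]

end Combinatorics

section SymmetricFamilies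

variable {n : ℕ} {U : Set (Fin n → ℝ)}

def leibnizTerm (B : Multiset (Fin n) → (Fin n → ℝ) → ℝ) (g : (Fin n → ℝ) → ℝ) (a b : ℕ)
    (x : Fin n → ℝ) : ℝ :=
  ∑ ρ : Fin b → Fin n, ∑ ν : Fin a → Fin n,
    pds (List.ofFn ν) (B (List.ofFn ρ + List.ofFn ν)) x * pds (List.ofFn ρ) g x

theorem contDiffOn_leibnizTerm (hU : IsOpen U) {B : Multiset (Fin n) → (Fin n → ℝ) → ℝ}
    (hB : ∀ M, ContDiffOn ℝ (⊤ : ℕ∞) (B M) U) {g : (Fin n → ℝ) → ℝ}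
    (hg : ContDiffOn ℝ (⊤ : ℕ∞) g U) (a b : ℕ) :
    ContDiffOn ℝ (⊤ : ℕ∞) (leibnizTerm B g a b) U :=
  ContDiffOn.sum fun _ _ => ContDiffOn.sum fun _ _ =>
    (contDiffOn_pds hU (hB _) _).mul (contDiffOn_pds hU hg _)

theorem sum_pd_leibnizTerm_cons (hU : IsOpen U) {B : Multiset (Fin n) → (Fin n → ℝ) → ℝ}
    (hB : ∀ M, ContDiffOn ℝ (⊤ : ℕ∞) (B M) U) {g : (Fin n → ℝ) → ℝ}
    (hg : ContDiffOn ℝ (⊤ : ℕ∞) g U) (a b : ℕ) {x : Fin n → ℝ} (hx : x ∈ U) :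
    ∑ c, pd c (leibnizTerm (fun M => B (c ::ₘ M)) g a b) x
      = leibnizTerm B g (a + 1) b x + leibnizTerm B g a (b + 1) x := by
  have hpd : ∀ c, pd c (leibnizTerm (fun M => B (c ::ₘ M)) g a b) x
      = ∑ ρ : Fin b → Fin n, ∑ ν : Fin a → Fin n,
        (pds (List.ofFn (Fin.cons c ν)) (B (List.ofFn ρ + List.ofFn (Fin.cons c ν))) x
            * pds (List.ofFn ρ) g x
          + pds (List.ofFn ν) (B (List.ofFn (Fin.cons c ρ) + List.ofFn ν)) x
            * pds (List.ofFn (Fin.cons c ρ)) g x) := by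
    intro c
    unfold leibnizTerm
    rw [pd_sum hU _ _ (fun ρ _ => ContDiffOn.sum fun ν _ =>
      (contDiffOn_pds hU (hB _) _).mul (contDiffOn_pds hU hg _)) hx]
    refine sum_congr rfl fun ρ _ => ?_
    rw [pd_sum hU _ _ (fun ν _ => (contDiffOn_pds hU (hB _) _).mul (contDiffOn_pds hU hg _)) hx]
    refine sum_congr rfl fun ν _ => ?_
    rw [pd_mul hU (contDiffOn_pds hU (hB _) _) (contDiffOn_pds hU hg _) hx]
    simp only [List.ofFn_cons, pds, ← Multiset.cons_coe, Multiset.add_cons, Multiset.cons_add]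
  simp only [hpd, sum_add_distrib, leibnizTerm]
  rw [sum_comm]
  congr 1
  · refine sum_congr rfl fun ρ _ => ?_
    rw [sum_fun_fin_succ]
  · rw [sum_fun_fin_succ]

theorem sum_pds_mul_eq_sum_antidiagonal (hU : IsOpen U) {B : Multiset (Fin n) → (Fin n → ℝ) → ℝ}
    (hB : ∀ M, ContDiffOn ℝ (⊤ : ℕ∞) (B M) U) {g : (Fin n → ℝ) → ℝ}
    (hg : ContDiffOn ℝ (⊤ : ℕ∞) g U) (k : ℕ) {x : Fin n → ℝ} (hx : x ∈ U) :
    ∑ μ : Fin k → Fin n, pds (List.ofFn μ) (fun y => B (List.ofFn μ) y * g y) x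
      = ∑ p ∈ antidiagonal k, (k.choose p.1 : ℝ) * leibnizTerm B g p.1 p.2 x := by
  induction k generalizing B x with
  | zero => simp [leibnizTerm, pds]
  | succ k ih =>
    have hBc : ∀ c M, ContDiffOn ℝ (⊤ : ℕ∞) (B (c ::ₘ M)) U := fun c M => hB _
    calc ∑ μ : Fin (k + 1) → Fin n, pds (List.ofFn μ) (fun y => B (List.ofFn μ) y * g y) x
        = ∑ c, pd c (fun y => ∑ μ : Fin k → Fin n,
            pds (List.ofFn μ) (fun y => B (c ::ₘ List.ofFn μ) y * g y) y) x := by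
          rw [sum_fun_fin_succ]
          refine sum_congr rfl fun c _ => ?_
          rw [pd_sum hU _ _ (fun μ _ => contDiffOn_pds hU ((hB _).mul hg) _) hx]
          simp only [List.ofFn_cons, pds, Multiset.cons_coe]
      _ = ∑ c, pd c (fun y => ∑ p ∈ antidiagonal k,
            (k.choose p.1 : ℝ) * leibnizTerm (fun M => B (c ::ₘ M)) g p.1 p.2 y) x :=
          sum_congr rfl fun c _ => pd_congr hU (fun y hy => ih (hBc c) hy) hx c
      _ = ∑ p ∈ antidiagonal k, (k.choose p.1 : ℝ) *
            (leibnizTerm B g (p.1 + 1) p.2 x + leibnizTerm B g p.1 (p.2 + 1) x) := by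
          simp_rw [← sum_pd_leibnizTerm_cons hU hB hg _ _ hx, mul_sum]
          rw [sum_comm]
          refine sum_congr rfl fun c _ => ?_
          rw [pd_sum hU _ _ (fun p _ => contDiffOn_const.mul
            (contDiffOn_leibnizTerm hU (hBc c) hg _ _)) hx]
          exact sum_congr rfl fun p _ =>
            pd_const_mul hU (contDiffOn_leibnizTerm hU (hBc c) hg _ _) _ hx c
      _ = ∑ p ∈ antidiagonal (k + 1), ((k + 1).choose p.1 : ℝ) * leibnizTerm B g p.1 p.2 x := by
          rw [sum_antidiagonal_choose_succ_mul (fun a b => leibnizTerm B g a b x),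
            ← sum_add_distrib]
          refine sum_congr rfl fun p hp => ?_
          rw [Nat.choose_symm_of_eq_add (mem_antidiagonal.1 hp).symm]
          ring

end SymmetricFamilies

section HigherEuler

variable {n : ℕ} {U : Set (Fin n → ℝ)}

def higherEuler (A : Multiset (Fin n) → (Fin n → ℝ) → ℝ) (r : ℕ) (M : Multiset (Fin n)) :
    (Fin n → ℝ) → ℝ :=
  fun y => ∑ l ∈ range (r - M.card + 1), ((M.card + l).choose M.card : ℝ) * (-1) ^ l *
    ∑ ν : Fin l → Fin n, pds (List.ofFn ν) (A (M + List.ofFn ν)) y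

theorem higherEuler_ofFn (A : Multiset (Fin n) → (Fin n → ℝ) → ℝ) (r : ℕ) {k : ℕ}
    (μ : Fin k → Fin n) :
    higherEuler A r (List.ofFn μ) = fun y => ∑ l ∈ range (r - k + 1),
      ((k + l).choose k : ℝ) * (-1) ^ l *
        ∑ ν : Fin l → Fin n, pds (List.ofFn ν) (A (List.ofFn (Fin.append μ ν))) y := by
  ext y
  simp only [higherEuler, Multiset.coe_card, List.length_ofFn, List.ofFn_fin_append,
    Multiset.coe_add]

theorem contDiffOn_higherEuler (hU : IsOpen U) {A : Multiset (Fin n) → (Fin n → ℝ) → ℝ}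
    (hA : ∀ M, ContDiffOn ℝ (⊤ : ℕ∞) (A M) U) (r : ℕ) (M : Multiset (Fin n)) :
    ContDiffOn ℝ (⊤ : ℕ∞) (higherEuler A r M) U :=
  ContDiffOn.sum fun _ _ => contDiffOn_const.mul
    (ContDiffOn.sum fun _ _ => contDiffOn_pds hU (hA _) _)

theorem sum_pds_higherEuler_add (hU : IsOpen U) {A : Multiset (Fin n) → (Fin n → ℝ) → ℝ}
    (hA : ∀ M, ContDiffOn ℝ (⊤ : ℕ∞) (A M) U) (r : ℕ) (M : Multiset (Fin n)) (l : ℕ)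
    {x : Fin n → ℝ} (hx : x ∈ U) :
    ∑ ν : Fin l → Fin n, pds (List.ofFn ν) (higherEuler A r (M + List.ofFn ν)) x
      = ∑ j ∈ range (r - M.card - l + 1),
          ((M.card + l + j).choose (M.card + l) : ℝ) * (-1) ^ j *
            ∑ τ : Fin (l + j) → Fin n, pds (List.ofFn τ) (A (M + List.ofFn τ)) x := by
  have hcard : ∀ ν : Fin l → Fin n, (M + List.ofFn ν).card = M.card + l := by simp
  have hexp : ∀ ν : Fin l → Fin n,
      pds (List.ofFn ν) (higherEuler A r (M + List.ofFn ν)) x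
        = ∑ j ∈ range (r - M.card - l + 1),
            ((M.card + l + j).choose (M.card + l) : ℝ) * (-1) ^ j *
              ∑ ν' : Fin j → Fin n,
                pds (List.ofFn (Fin.append ν ν')) (A (M + List.ofFn (Fin.append ν ν'))) x := by
    intro ν
    unfold higherEuler
    rw [pds_sum hU _ _ (fun j _ => contDiffOn_const.mul
      (ContDiffOn.sum fun _ _ => contDiffOn_pds hU (hA _) _)) _ hx]
    simp only [hcard, Nat.sub_sub]
    refine sum_congr rfl fun j _ => ?_
    rw [pds_const_mul hU (ContDiffOn.sum fun _ _ => contDiffOn_pds hU (hA _) _) _ _ hx,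
      pds_sum hU _ _ (fun _ _ => contDiffOn_pds hU (hA _) _) _ hx]
    simp only [List.ofFn_fin_append, pds_append, Multiset.coe_add, add_assoc]
  simp only [hexp]
  rw [sum_comm]
  refine sum_congr rfl fun j _ => ?_
  rw [← mul_sum, sum_fun_fin_append]

theorem sum_pds_higherEuler (hU : IsOpen U) {A : Multiset (Fin n) → (Fin n → ℝ) → ℝ}
    (hA : ∀ M, ContDiffOn ℝ (⊤ : ℕ∞) (A M) U) (r : ℕ) (M : Multiset (Fin n))
    {x : Fin n → ℝ} (hx : x ∈ U) :
    ∑ l ∈ range (r - M.card + 1), ((M.card + l).choose M.card : ℝ) *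
        ∑ ν : Fin l → Fin n, pds (List.ofFn ν) (higherEuler A r (M + List.ofFn ν)) x
      = A M x := by
  set W : ℕ → ℝ := fun K => ∑ τ : Fin K → Fin n, pds (List.ofFn τ) (A (M + List.ofFn τ)) x
  calc _ = ∑ l ∈ range (r - M.card + 1), ∑ j ∈ range (r - M.card - l + 1),
          ((M.card + l).choose M.card : ℝ) * ((M.card + l + j).choose (M.card + l) : ℝ) *
            (-1) ^ j * W (l + j) := by
        refine sum_congr rfl fun l _ => ?_
        rw [sum_pds_higherEuler_add hU hA r M l hx, mul_sum]
        exact sum_congr rfl fun j _ => by simp only [W]; ring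
    _ = ∑ K ∈ range (r - M.card + 1), ((M.card + K).choose M.card : ℝ) * 0 ^ K * W K := by
        rw [sum_range_sum_range_sub_eq_sum_antidiagonal (r - M.card) (fun l j =>
          ((M.card + l).choose M.card : ℝ) * ((M.card + l + j).choose (M.card + l) : ℝ) *
            (-1) ^ j * W (l + j))]
        refine sum_congr rfl fun K _ => ?_
        rw [← sum_antidiagonal_choose_mul_choose_mul_neg_one_pow, sum_mul]
        refine sum_congr rfl fun p hp => ?_
        obtain rfl := mem_antidiagonal.1 hp
        rw [add_assoc]
    _ = A M x := by
        rw [sum_range_succ']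
        simp [W, pds]

theorem sum_mul_pds_eq_sum_pds_higherEuler_mul (hU : IsOpen U)
    {A : Multiset (Fin n) → (Fin n → ℝ) → ℝ} (hA : ∀ M, ContDiffOn ℝ (⊤ : ℕ∞) (A M) U)
    {g : (Fin n → ℝ) → ℝ} (hg : ContDiffOn ℝ (⊤ : ℕ∞) g U) (r : ℕ) {x : Fin n → ℝ}
    (hx : x ∈ U) :
    ∑ k ∈ range (r + 1), ∑ μ : Fin k → Fin n, A (List.ofFn μ) x * pds (List.ofFn μ) g x
      = ∑ k ∈ range (r + 1), ∑ μ : Fin k → Fin n,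
          pds (List.ofFn μ) (fun y => higherEuler A r (List.ofFn μ) y * g y) x := by
  calc _ = ∑ k ∈ range (r + 1), ∑ l ∈ range (r - k + 1),
          ((k + l).choose k : ℝ) * leibnizTerm (higherEuler A r) g l k x := by
        refine sum_congr rfl fun k _ => ?_
        have hinv := fun μ : Fin k → Fin n => sum_pds_higherEuler hU hA r (List.ofFn μ) hx
        simp only [Multiset.coe_card, List.length_ofFn] at hinv
        simp only [← hinv, sum_mul, mul_sum, mul_assoc, leibnizTerm]
        rw [sum_comm]
    _ = ∑ K ∈ range (r + 1), ∑ p ∈ antidiagonal K,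
          (K.choose p.1 : ℝ) * leibnizTerm (higherEuler A r) g p.1 p.2 x := by
        rw [sum_range_sum_range_sub_eq_sum_antidiagonal r (fun k l =>
          ((k + l).choose k : ℝ) * leibnizTerm (higherEuler A r) g l k x)]
        refine sum_congr rfl fun K _ => ?_
        rw [← Nat.sum_antidiagonal_swap]
        refine sum_congr rfl fun p hp => ?_
        rw [Prod.fst_swap, Prod.snd_swap, Nat.choose_symm_add, add_comm, mem_antidiagonal.1 hp]
    _ = _ := by
        refine sum_congr rfl fun K _ => ?_
        exact (sum_pds_mul_eq_sum_antidiagonal hU (contDiffOn_higherEuler hU hA r) hg K hx).symm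

theorem sum_sum_mul_pds_eq_sum_pds_sum_higherEuler_mul (hU : IsOpen U) {ι : Type*} [Fintype ι]
    {A : ι → Multiset (Fin n) → (Fin n → ℝ) → ℝ} (hA : ∀ i M, ContDiffOn ℝ (⊤ : ℕ∞) (A i M) U)
    {g : ι → (Fin n → ℝ) → ℝ} (hg : ∀ i, ContDiffOn ℝ (⊤ : ℕ∞) (g i) U) (r : ℕ)
    {x : Fin n → ℝ} (hx : x ∈ U) :
    ∑ k ∈ range (r + 1), ∑ μ : Fin k → Fin n, ∑ i,
        A i (List.ofFn μ) x * pds (List.ofFn μ) (g i) x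
      = ∑ k ∈ range (r + 1), ∑ μ : Fin k → Fin n,
          pds (List.ofFn μ) (fun y => ∑ i, higherEuler (A i) r (List.ofFn μ) y * g i y) x := by
  calc _ = ∑ i, ∑ k ∈ range (r + 1), ∑ μ : Fin k → Fin n,
          A i (List.ofFn μ) x * pds (List.ofFn μ) (g i) x :=
        (sum_congr rfl fun k _ => sum_comm).trans sum_comm
    _ = ∑ i, ∑ k ∈ range (r + 1), ∑ μ : Fin k → Fin n,
          pds (List.ofFn μ) (fun y => higherEuler (A i) r (List.ofFn μ) y * g i y) x :=
        sum_congr rfl fun i _ => sum_mul_pds_eq_sum_pds_higherEuler_mul hU (hA i) (hg i) r hx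
    _ = _ := by
        rw [sum_comm]
        refine sum_congr rfl fun k _ => ?_
        rw [sum_comm]
        exact sum_congr rfl fun μ _ => (pds_sum hU _ _
          (fun i _ => (contDiffOn_higherEuler hU (hA i) r _).mul (hg i)) _ hx).symm

end HigherEuler

section JetDerivatives

variable {n m r : ℕ}

theorem exists_comp_perm_of_perm_ofFn {α : Type*} [LinearOrder α] {k : ℕ} {μ μ' : Fin k → α}
    (h : (List.ofFn μ).Perm (List.ofFn μ')) : ∃ σ : Equiv.Perm (Fin k), μ' = μ ∘ σ := by
  have hsort : μ ∘ Tuple.sort μ = μ' ∘ Tuple.sort μ' := by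
    apply List.ofFn_injective
    exact List.Perm.eq_of_sortedLE
      (Tuple.monotone_sort μ).sortedLE_ofFn (Tuple.monotone_sort μ').sortedLE_ofFn
      (((Tuple.sort μ).ofFn_comp_perm μ).trans
        (h.trans ((Tuple.sort μ').ofFn_comp_perm μ').symm))
  refine ⟨Tuple.sort μ * (Tuple.sort μ')⁻¹, funext fun i => ?_⟩
  simpa using (congrFun hsort ((Tuple.sort μ')⁻¹ i)).symm

theorem symCoeff_comp_perm {k k' : ℕ} (μ : Fin k → Fin n) (σ : Equiv.Perm (Fin k))
    (ν : Fin k' → Fin n) : symCoeff (μ ∘ σ) ν = symCoeff μ ν := by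
  rw [symCoeff, symCoeff, Finset.card_equiv (Equiv.mulLeft σ)]
  intro τ
  simp [Equiv.Perm.coe_mul, Function.comp_assoc]

theorem pdQ_eq_of_perm (L : JetSpace n m r → ℝ) (i : Fin m) {k k' : ℕ}
    {μ : Fin k → Fin n} {μ' : Fin k' → Fin n} (h : (List.ofFn μ).Perm (List.ofFn μ')) :
    pdQ L i μ = pdQ L i μ' := by
  obtain rfl : k = k' := by simpa using h.length_eq
  obtain ⟨σ, rfl⟩ := exists_comp_perm_of_perm_ofFn h
  unfold pdQ jetDir
  simp only [symCoeff_comp_perm]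

theorem pdQ_toList_get (L : JetSpace n m r → ℝ) (i : Fin m) {k : ℕ} (μ : Fin k → Fin n) :
    pdQ L i (List.ofFn μ : Multiset (Fin n)).toList.get = pdQ L i μ :=
  pdQ_eq_of_perm L i (by rw [List.ofFn_get]; exact Quotient.exact (Multiset.coe_toList _))

variable {U : Set (Fin n → ℝ)}

theorem contDiffOn_jetOf (hU : IsOpen U) {q : (Fin n → ℝ) → Fin m → ℝ}
    (hq : ContDiffOn ℝ (⊤ : ℕ∞) q U) : ContDiffOn ℝ (⊤ : ℕ∞) (jetOf r q) U :=
  contDiffOn_id.prodMk <| contDiffOn_pi.2 fun p =>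
    contDiffOn_pds hU (contDiffOn_pi.1 hq p.1) (List.ofFn p.2.2)

theorem contDiffOn_pdQ_jetOf (hU : IsOpen U) {L : JetSpace n m r → ℝ}
    (hL : ContDiffOn ℝ (⊤ : ℕ∞) L {z | z.1 ∈ U}) {q : (Fin n → ℝ) → Fin m → ℝ}
    (hq : ContDiffOn ℝ (⊤ : ℕ∞) q U) (i : Fin m) {k : ℕ} (μ : Fin k → Fin n) :
    ContDiffOn ℝ (⊤ : ℕ∞) (fun y => pdQ L i μ (jetOf r q y)) U :=
  ((hL.fderiv_of_isOpen (hU.preimage continuous_fst) (by norm_cast)).clm_apply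
    contDiffOn_const).comp (contDiffOn_jetOf hU hq) fun _ hx => hx

end JetDerivatives

/-- **First variation via the higher Euler operators** (eq. (C.5)).
For a Lagrangian `L` of order `r` in `m` field components over an open set `U ⊆ ℝⁿ`,
for every smooth field `q` and smooth variation `δq`, as smooth functions on `U`:
`Σ_{k=0}^{r} (∂L/∂q^i_{,μ₁…μₖ})[q] ∂_{μ₁}⋯∂_{μₖ} δq^i
  = Σ_{k=0}^{r} ∂_{μ₁}⋯∂_{μₖ}( (δL/δq^i_{,μ₁…μₖ})[q] δq^i )`,
where `δL/δq^i_{,μ₁…μₖ} = Σ_{l=0}^{r−k} binom(k+l,k) (−1)^l d_{ν₁}⋯d_{ν_l}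
∂L/∂q^i_{,μ₁…μₖν₁…ν_l}` (total derivatives evaluated along `q` as `x`-derivatives). -/
theorem first_variation_higher_euler
    (n m r : ℕ) (U : Set (Fin n → ℝ)) (hU : IsOpen U)
    (L : JetSpace n m r → ℝ) (hL : ContDiffOn ℝ (⊤ : ℕ∞) L {z | z.1 ∈ U})
    (q δq : (Fin n → ℝ) → Fin m → ℝ)
    (hq : ContDiffOn ℝ (⊤ : ℕ∞) q U) (hδq : ContDiffOn ℝ (⊤ : ℕ∞) δq U) :
    ∀ x ∈ U,
      ∑ k ∈ Finset.range (r + 1), ∑ μ : Fin k → Fin n, ∑ i : Fin m,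
        pdQ L i μ (jetOf r q x) * pds (List.ofFn μ) (fun y => δq y i) x
      = ∑ k ∈ Finset.range (r + 1), ∑ μ : Fin k → Fin n,
          pds (List.ofFn μ)
            (fun y => ∑ i : Fin m,
              (∑ l ∈ Finset.range (r - k + 1),
                ((k + l).choose k : ℝ) * (-1 : ℝ) ^ l *
                  ∑ ν : Fin l → Fin n,
                    pds (List.ofFn ν)
                      (fun w => pdQ L i (Fin.append μ ν) (jetOf r q w)) y) *
                δq y i) x := by
  intro x hx
  have h := sum_sum_mul_pds_eq_sum_pds_sum_higherEuler_mul hU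
    (A := fun i M y => pdQ L i M.toList.get (jetOf r q y))
    (fun i M => contDiffOn_pdQ_jetOf hU hL hq i _) (fun i => contDiffOn_pi.1 hδq i) r hx
  simpa only [higherEuler_ofFn, pdQ_toList_get] using h
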